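/- For any linear operator A on C^{2S+1}, Tr(A) = (2S+1)/(4π) ∫_{S²} ⟨Ω|A|Ω⟩ dΩ, where the integral is over the 2-sphere with uniform surface measure of total mass 4π. -/

import Mathlib

/-!
In `⟨Ω|A|Ω⟩ = ∑ j k, conj Ω_j A_jk Ω_k` the term `(j, k)` depends on `φ` only through the phase
`e^{i(j-k)φ}`, so the `φ`-integral keeps only the diagonal, each `A_kk` weighted by
`2π |Ω_k|² = 2π binom(n,k) cos(θ/2)^{2k} sin(θ/2)^{2(n-k)}`. Substituting `u = sin²(θ/2)` turns
the `θ`-integral of that weight against `sin θ dθ` into the Beta integral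
`2 binom(n,k) B(n-k+1, k+1) = 2/(n+1)`, the same for every `k`.
-/

/-- The spin-`S` Bloch coherent state for `2S = n`, expressed in the basis `|M⟩`
indexed by `k = S + M ∈ {0, …, n}`:
`|Ω⟩_k = binom(2S, S+M)^{1/2} (cos(θ/2))^{S+M} (sin(θ/2))^{S-M} e^{i(S-M)φ}`. -/
noncomputable def coherentState (n : ℕ) (θ φ : ℝ) : Fin (n + 1) → ℂ := fun k =>
  (Real.sqrt (n.choose k) : ℂ) * (Real.cos (θ / 2) : ℂ) ^ (k : ℕ)
    * (Real.sin (θ / 2) : ℂ) ^ (n - (k : ℕ))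
    * Complex.exp (Complex.I * ((n - (k : ℕ) : ℕ) : ℂ) * (φ : ℂ))

open Real Matrix Finset intervalIntegral

theorem integral_exp_I_mul_intCast_mul (m : ℤ) :
    ∫ x in (0 : ℝ)..2 * π, Complex.exp (Complex.I * m * x) =
      if m = 0 then (2 * π : ℂ) else 0 := by
  split_ifs with hm
  · simp [hm]
  · have hc : Complex.I * m ≠ 0 := mul_ne_zero Complex.I_ne_zero (Int.cast_ne_zero.mpr hm)
    have hperiod : Complex.exp (Complex.I * m * (2 * π)) = 1 := by
      rw [← Complex.exp_int_mul_two_pi_mul_I m]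
      ring_nf
    rw [integral_exp_mul_complex hc]
    push_cast
    simp [hperiod]

open scoped Nat in
theorem integral_pow_mul_one_sub_pow (a b : ℕ) :
    ∫ x in (0 : ℝ)..1, x ^ a * (1 - x) ^ b = a ! * b ! / (a + b + 1)! := by
  have hbeta := Complex.Gamma_mul_Gamma_eq_betaIntegral (s := a + 1) (t := b + 1)
    (by simp; positivity) (by simp; positivity)
  have hsum : (a + 1 : ℂ) + (b + 1) = ((a + b + 1 : ℕ) : ℂ) + 1 := by push_cast; ring
  rw [hsum, Complex.Gamma_nat_eq_factorial, Complex.Gamma_nat_eq_factorial,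
    Complex.Gamma_nat_eq_factorial, Complex.betaIntegral] at hbeta
  have hintegrand : ∀ x : ℝ, (x : ℂ) ^ ((a : ℂ) + 1 - 1) * (1 - (x : ℂ)) ^ ((b : ℂ) + 1 - 1) =
      ((x ^ a * (1 - x) ^ b : ℝ) : ℂ) := by
    intro x
    rw [add_sub_cancel_right, add_sub_cancel_right, Complex.cpow_natCast, Complex.cpow_natCast]
    push_cast
    ring
  simp only [hintegrand, integral_ofReal] at hbeta
  rw [eq_div_iff (by positivity)]
  exact_mod_cast (hbeta.trans (mul_comm _ _)).symm

open scoped Nat in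
theorem integral_sin_mul_cos_half_pow_mul_sin_half_pow (k m : ℕ) :
    ∫ θ in (0 : ℝ)..π, sin θ * (cos (θ / 2) ^ (2 * k) * sin (θ / 2) ^ (2 * m)) =
      2 * (m ! * k ! / (m + k + 1)!) := by
  have hderiv : ∀ θ ∈ Set.uIcc 0 π,
      HasDerivAt (fun t => (1 - cos t) / 2) (sin θ / 2) θ := fun θ _ => by
    simpa using ((hasDerivAt_cos θ).const_sub 1).div_const 2
  have hintegrand : ∀ θ : ℝ,
      sin θ * (cos (θ / 2) ^ (2 * k) * sin (θ / 2) ^ (2 * m)) =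
        ((fun u => 2 * (u ^ m * (1 - u) ^ k)) ∘ fun t => (1 - cos t) / 2) θ *
          (sin θ / 2) := by
    intro θ
    have hcos : cos (θ / 2) ^ 2 = 1 - (1 - cos θ) / 2 := by
      rw [cos_sq, mul_div_cancel₀ θ two_ne_zero]; ring
    have hsin : sin (θ / 2) ^ 2 = (1 - cos θ) / 2 := by
      rw [sin_sq, hcos]; ring
    simp only [Function.comp, pow_mul, hcos, hsin]
    ring
  simp only [hintegrand]
  rw [integral_comp_mul_deriv hderiv (by fun_prop) (by fun_prop)]
  simp [integral_const_mul, integral_pow_mul_one_sub_pow]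

/-- `|⟨M|Ω⟩|²` for `k = S + M`, independent of `φ`. -/
noncomputable def coherentWeight (n k : ℕ) (θ : ℝ) : ℝ :=
  n.choose k * (cos (θ / 2) ^ (2 * k) * sin (θ / 2) ^ (2 * (n - k)))

theorem star_coherentState_mul_coherentState (n : ℕ) (θ φ : ℝ) (j k : Fin (n + 1)) :
    star (coherentState n θ φ j) * coherentState n θ φ k =
      ((√(n.choose j) * √(n.choose k) *
          (cos (θ / 2) ^ ((j : ℕ) + k) * sin (θ / 2) ^ ((n - j) + (n - k))) : ℝ) : ℂ) *
        Complex.exp (Complex.I * ((j - k : ℤ) : ℂ) * φ) := by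
  have hphase : -Complex.I * ((n - j : ℕ) : ℂ) * φ + Complex.I * ((n - k : ℕ) : ℂ) * φ =
      Complex.I * ((j - k : ℤ) : ℂ) * φ := by
    push_cast [Nat.cast_sub j.is_le, Nat.cast_sub k.is_le]
    ring
  simp only [coherentState, star_mul', ← Complex.exp_conj, Complex.star_def, map_mul, map_pow,
    Complex.conj_ofReal, Complex.conj_I, Complex.conj_natCast]
  rw [← hphase, Complex.exp_add]
  push_cast
  ring

theorem integral_star_coherentState_mul_coherentState (n : ℕ) (θ : ℝ) (j k : Fin (n + 1)) :
    ∫ φ in (0 : ℝ)..2 * π, star (coherentState n θ φ j) * coherentState n θ φ k =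
      if j = k then (2 * π * coherentWeight n k θ : ℂ) else 0 := by
  simp only [star_coherentState_mul_coherentState, integral_const_mul,
    integral_exp_I_mul_intCast_mul, sub_eq_zero, Nat.cast_inj, Fin.val_inj]
  split_ifs with hjk
  · subst hjk
    have hsq : √(n.choose j) * √(n.choose j) = n.choose j := Real.mul_self_sqrt (Nat.cast_nonneg _)
    simp only [coherentWeight, ← two_mul, hsq]
    push_cast
    ring
  · rw [mul_zero]

theorem integral_dotProduct_mulVec_coherentState (n : ℕ) (A : Matrix (Fin (n + 1)) (Fin (n + 1)) ℂ)
    (θ : ℝ) :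
    ∫ φ in (0 : ℝ)..2 * π, star (coherentState n θ φ) ⬝ᵥ A *ᵥ coherentState n θ φ =
      2 * π * ∑ k, A k k * coherentWeight n k θ := by
  have hexpand : ∀ φ, star (coherentState n θ φ) ⬝ᵥ A *ᵥ coherentState n θ φ =
      ∑ j, ∑ k, A j k * (star (coherentState n θ φ j) * coherentState n θ φ k) := fun φ => by
    simp only [dotProduct, mulVec, Pi.star_apply, mul_sum]
    exact sum_congr rfl fun j _ => sum_congr rfl fun k _ => by ring
  have hcont : ∀ j k, Continuous fun φ =>
      A j k * (star (coherentState n θ φ j) * coherentState n θ φ k) := fun j k => by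
    unfold coherentState
    fun_prop
  simp only [hexpand]
  rw [integral_finsetSum fun j _ =>
    (continuous_finsetSum _ fun k _ => hcont j k).intervalIntegrable _ _]
  simp only [integral_finsetSum fun k _ => (hcont _ k).intervalIntegrable _ _, integral_const_mul,
    integral_star_coherentState_mul_coherentState, mul_ite, mul_zero, sum_ite_eq, mem_univ,
    if_true, mul_sum]
  exact sum_congr rfl fun k _ => by ring

theorem integral_sin_mul_coherentWeight {n k : ℕ} (hk : k ≤ n) :
    ∫ θ in (0 : ℝ)..π, sin θ * coherentWeight n k θ = 2 / (n + 1) := by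
  have hintegrand : ∀ θ, sin θ * coherentWeight n k θ = n.choose k *
      (sin θ * (cos (θ / 2) ^ (2 * k) * sin (θ / 2) ^ (2 * (n - k)))) :=
    fun θ => by rw [coherentWeight]; ring
  have hchoose : (n.choose k * k.factorial * (n - k).factorial : ℝ) = n.factorial := by
    exact_mod_cast Nat.choose_mul_factorial_mul_factorial hk
  simp only [hintegrand, integral_const_mul,
    integral_sin_mul_cos_half_pow_mul_sin_half_pow, Nat.sub_add_cancel hk, Nat.factorial_succ]
  push_cast
  field_simp
  linear_combination hchoose

open Matrix Finset in
/-- Trace formula: for any linear operator `A` on `ℂ^{2S+1}` (with `2S = n`),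
`Tr(A) = (2S+1)/(4π) ∫_{S²} ⟨Ω|A|Ω⟩ dΩ`, where the sphere is parametrized by the
spherical angles `(θ,φ)` with surface measure `sinθ dθ dφ` of total mass `4π`. -/
theorem trace_eq_integral_lower_symbol (n : ℕ) (A : Matrix (Fin (n + 1)) (Fin (n + 1)) ℂ) :
    A.trace
      = (((n : ℂ) + 1) / (4 * (Real.pi : ℂ)))
        * ∫ θ in (0 : ℝ)..Real.pi, ∫ φ in (0 : ℝ)..(2 * Real.pi),
            ((Real.sin θ : ℝ) : ℂ)
              * (star (coherentState n θ φ) ⬝ᵥ A.mulVec (coherentState n θ φ)) := by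
  have hphi : ∀ θ, ∫ φ in (0 : ℝ)..(2 * π),
      ((sin θ : ℝ) : ℂ) * (star (coherentState n θ φ) ⬝ᵥ A.mulVec (coherentState n θ φ)) =
        ∑ k, 2 * π * A k k * ((sin θ * coherentWeight n k θ : ℝ) : ℂ) := fun θ => by
    rw [integral_const_mul, integral_dotProduct_mulVec_coherentState, mul_sum, mul_sum]
    exact sum_congr rfl fun k _ => by push_cast; ring
  have hcont : ∀ k : Fin (n + 1), Continuous fun θ =>
      2 * π * A k k * ((sin θ * coherentWeight n k θ : ℝ) : ℂ) := fun k => by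
    unfold coherentWeight
    fun_prop
  simp only [hphi]
  rw [integral_finsetSum fun k _ => (hcont k).intervalIntegrable _ _]
  simp only [integral_const_mul, integral_ofReal, integral_sin_mul_coherentWeight (Fin.is_le _),
    trace, Matrix.diag, mul_sum]
  refine sum_congr rfl fun k _ => ?_
  have hpi : (π : ℂ) ≠ 0 := Complex.ofReal_ne_zero.mpr pi_ne_zero
  push_cast
  field_simp
  ring
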